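/- Let m = 3 with alternatives {1,2,3}, and let P be a profile of n votes whose weighted majority graph has weights w(1,2), w(2,3), w(3,1) all in [0, √n] (a majority cycle). Suppose a voting rule r satisfies: whenever B voters with vote [2≻3≻1] change to [3≻2≻1], the winner does not change if the old winner was 1; similarly for the other two branches. Then along the branch where √n/B successive groups of B voters change [2≻3≻1] to [3≻2≻1], if r(root) = 1, the final profile has 3 as Condorcet winner while r still outputs 1, so r violates the Condorcet criterion or Maskin monotonicity with bound B at some profile in this chain. -/
import Mathlib


open Finset

attribute [local instance] Classical.propDecidable

/-- A vote is a linear order on `Fin m`, encoded as a permutation `σ`, where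
`σ k` is the alternative in position `k`. -/
def prefers {m : ℕ} (σ : Equiv.Perm (Fin m)) (a b : Fin m) : Prop :=
  σ.symm a < σ.symm b

/-- `a` is the (strict) Condorcet winner of profile `P`. -/
def condorcetAt {m n : ℕ} (P : Fin n → Equiv.Perm (Fin m)) (a : Fin m) : Prop :=
  ∀ b : Fin m, b ≠ a →
    (univ.filter fun j : Fin n => prefers (P j) a b).card >
      (univ.filter fun j : Fin n => prefers (P j) b a).card

/-- Weighted majority margin `w_P(a,b)`. -/
noncomputable def wmg {m n : ℕ} (P : Fin n → Equiv.Perm (Fin m)) (a b : Fin m) : ℤ :=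
  ((univ.filter fun j : Fin n => prefers (P j) a b).card : ℤ) -
    ((univ.filter fun j : Fin n => prefers (P j) b a).card : ℤ)

lemma wmg_eq_sum {m n : ℕ} (P : Fin n → Equiv.Perm (Fin m)) (a b : Fin m) :
    wmg P a b = ∑ j : Fin n,
      ((if prefers (P j) a b then 1 else 0) - (if prefers (P j) b a then 1 else 0) : ℤ) := by
  unfold wmg
  rw [Finset.card_filter, Finset.card_filter, Finset.sum_sub_distrib]
  push_cast
  rfl

lemma wmg_neg {m n : ℕ} (P : Fin n → Equiv.Perm (Fin m)) (a b : Fin m) :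
    wmg P b a = - wmg P a b := by
  unfold wmg; ring


/-- Left branch of the C&M violation template (`m = 3`, alternatives `1,2,3`
encoded as `0,1,2`): starting from a profile with cyclic WMG weights
`w(1,2), w(2,3) ∈ [0,√n]`, `0 < w(3,1) ≤ √n`, along a chain where `√n/B`
successive groups of `B` voters change `[2≻3≻1]` to `[3≻2≻1]`, if `r` picks
alternative `1` at the root then either Maskin monotonicity with bound `B` is
violated at some profile of the chain, or the final profile has `3` as
Condorcet winner while `r` still outputs `1` (violating the Condorcet
criterion). -/
theorem CM_chain_violation (n s B k : ℕ) (hn : n = s ^ 2) (hs : 1 ≤ s)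
    (hB1 : 1 ≤ B) (hBs : B ∣ s) (hk : k = s / B)
    (σ231 σ321 : Equiv.Perm (Fin 3))
    (h231 : σ231 0 = 1 ∧ σ231 1 = 2 ∧ σ231 2 = 0)
    (h321 : σ321 0 = 2 ∧ σ321 1 = 1 ∧ σ321 2 = 0)
    (r : (Fin n → Equiv.Perm (Fin 3)) → Fin 3)
    (Q : ℕ → Fin n → Equiv.Perm (Fin 3))
    (hw12 : 0 ≤ wmg (Q 0) 0 1 ∧ wmg (Q 0) 0 1 ≤ (s : ℤ))
    (hw23 : 0 ≤ wmg (Q 0) 1 2 ∧ wmg (Q 0) 1 2 ≤ (s : ℤ))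
    (hw31 : 0 < wmg (Q 0) 2 0 ∧ wmg (Q 0) 2 0 ≤ (s : ℤ))
    (hstep : ∀ i < k, ∃ S : Finset (Fin n), S.card = B ∧
      (∀ j ∈ S, Q i j = σ231 ∧ Q (i + 1) j = σ321) ∧
      (∀ j ∉ S, Q (i + 1) j = Q i j))
    (hroot : r (Q 0) = 0) :
    (∃ i ≤ k, ∃ P' : Fin n → Equiv.Perm (Fin 3),
        (univ.filter fun j : Fin n => Q i j ≠ P' j).card ≤ B ∧
        (∀ j : Fin n, Q i j ≠ P' j →
          ∀ b : Fin 3, prefers (Q i j) (r (Q i)) b → prefers (P' j) (r (Q i)) b) ∧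
        r P' ≠ r (Q i)) ∨
      (condorcetAt (Q k) 2 ∧ r (Q k) = 0) := by
  obtain ⟨e0, e1, e2⟩ := h231
  obtain ⟨f0, f1, f2⟩ := h321
  -- symm values
  have s1 : σ231.symm 1 = 0 := by rw [Equiv.symm_apply_eq, e0]
  have s2 : σ231.symm 2 = 1 := by rw [Equiv.symm_apply_eq, e1]
  have s0 : σ231.symm 0 = 2 := by rw [Equiv.symm_apply_eq, e2]
  have t2 : σ321.symm 2 = 0 := by rw [Equiv.symm_apply_eq, f0]
  have t1 : σ321.symm 1 = 1 := by rw [Equiv.symm_apply_eq, f1]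
  have t0 : σ321.symm 0 = 2 := by rw [Equiv.symm_apply_eq, f2]
  -- preference facts
  have p231_12 : prefers σ231 1 2 := by simp [prefers, s1, s2]
  have p231_n21 : ¬ prefers σ231 2 1 := by simp [prefers, s1, s2]
  have p231_20 : prefers σ231 2 0 := by simp [prefers, s0, s2]
  have p231_n02 : ¬ prefers σ231 0 2 := by simp [prefers, s0, s2]
  have p231_n0 : ∀ b : Fin 3, ¬ prefers σ231 0 b := by
    intro b hb
    have hlt := (σ231.symm b).isLt
    rw [prefers, s0] at hb
    rw [Fin.lt_def] at hb
    omega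
  have p321_21 : prefers σ321 2 1 := by simp [prefers, t1, t2]
  have p321_n12 : ¬ prefers σ321 1 2 := by simp [prefers, t1, t2]
  have p321_20 : prefers σ321 2 0 := by simp [prefers, t0, t2]
  have p321_n02 : ¬ prefers σ321 0 2 := by simp [prefers, t0, t2]
  -- one-step wmg changes
  have hstepw : ∀ i < k, wmg (Q (i+1)) 2 1 = wmg (Q i) 2 1 + 2 * B ∧
      wmg (Q (i+1)) 2 0 = wmg (Q i) 2 0 := by
    intro i hi
    obtain ⟨S, hScard, hSin, hSout⟩ := hstep i hi
    have key : ∀ a b : Fin 3,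
        (((if prefers σ321 a b then 1 else 0) - (if prefers σ321 b a then 1 else 0) : ℤ)
          - ((if prefers σ231 a b then 1 else 0) - (if prefers σ231 b a then 1 else 0))) = 
          ((if prefers σ321 a b then 1 else 0) - (if prefers σ321 b a then 1 else 0) : ℤ)
          - ((if prefers σ231 a b then 1 else 0) - (if prefers σ231 b a then 1 else 0)) := fun _ _ => rfl
    have main : ∀ a b : Fin 3, wmg (Q (i+1)) a b - wmg (Q i) a b =
        S.card • (((if prefers σ321 a b then 1 else 0) - (if prefers σ321 b a then 1 else 0) : ℤ)
          - ((if prefers σ231 a b then 1 else 0) - (if prefers σ231 b a then 1 else 0))) := by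
      intro a b
      rw [wmg_eq_sum, wmg_eq_sum, ← Finset.sum_sub_distrib]
      rw [← Finset.sum_subset (Finset.subset_univ S)]
      · rw [Finset.sum_congr rfl (fun j hj => ?_), Finset.sum_const]
        obtain ⟨hQi, hQi1⟩ := hSin j hj
        rw [hQi, hQi1]
      · intro j _ hj
        rw [hSout j hj]
        ring
    constructor
    · have := main 2 1
      simp only [if_pos p321_21, if_neg p321_n12, if_neg p231_n21, if_pos p231_12,
        hScard] at this
      rw [nsmul_eq_mul] at this
      push_cast at this
      linarith
    · have := main 2 0
      simp only [if_pos p321_20, if_neg p321_n02, if_pos p231_20, if_neg p231_n02,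
        hScard] at this
      simp at this
      linarith
  -- accumulated wmg
  have hacc : ∀ i ≤ k, wmg (Q i) 2 1 = wmg (Q 0) 2 1 + 2 * B * i ∧
      wmg (Q i) 2 0 = wmg (Q 0) 2 0 := by
    intro i hi
    induction i with
    | zero => simp
    | succ j ih =>
      have hjk : j < k := by omega
      obtain ⟨a1, a2⟩ := ih (by omega)
      obtain ⟨b1, b2⟩ := hstepw j hjk
      constructor
      · rw [b1, a1]; push_cast; ring
      · rw [b2, a2]
  -- case split: does r stay 0 along the chain?
  by_cases hall : ∀ i ≤ k, r (Q i) = 0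
  · right
    refine ⟨?_, hall k le_rfl⟩
    have hBk : (B : ℤ) * k = s := by
      have : B * k = s := by rw [hk]; exact Nat.mul_div_cancel' hBs
      exact_mod_cast this
    obtain ⟨c1, c2⟩ := hacc k le_rfl
    have h21 : 0 < wmg (Q k) 2 1 := by
      have h12 : wmg (Q 0) 2 1 = - wmg (Q 0) 1 2 := wmg_neg _ _ _
      rw [c1, h12]
      have := hw23.2
      have hs' : (1 : ℤ) ≤ s := by exact_mod_cast hs
      nlinarith
    have h20 : 0 < wmg (Q k) 2 0 := by rw [c2]; exact hw31.1
    intro b hb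
    have hbv : b = 0 ∨ b = 1 := by
      have h3 := b.isLt
      have h2 : b.val ≠ 2 := fun h => hb (Fin.ext h)
      have : b.val = 0 ∨ b.val = 1 := by omega
      rcases this with h | h
      · exact Or.inl (Fin.ext h)
      · exact Or.inr (Fin.ext h)
    unfold wmg at h21 h20
    rcases hbv with rfl | rfl
    · omega
    · omega
  · -- find first failing step
    push_neg at hall
    have hexists : ∃ i < k, r (Q i) = 0 ∧ r (Q (i + 1)) ≠ 0 := by
      by_contra hno
      push_neg at hno
      obtain ⟨i, hik, hri⟩ := hall
      apply hri
      clear hri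
      induction i with
      | zero => exact hroot
      | succ j ih =>
        have h0 : r (Q j) = 0 := ih (by omega)
        exact hno j (by omega) h0
    obtain ⟨i, hik, hri, hri1⟩ := hexists
    left
    refine ⟨i, le_of_lt hik, Q (i + 1), ?_, ?_, ?_⟩
    · obtain ⟨S, hScard, hSin, hSout⟩ := hstep i hik
      calc (univ.filter fun j : Fin n => Q i j ≠ Q (i+1) j).card
          ≤ S.card := by
            apply Finset.card_le_card
            intro j hj
            simp only [Finset.mem_filter] at hj
            by_contra hjS
            exact hj.2 (hSout j hjS).symm
        _ = B := hScard
    · intro j hj b hpref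
      obtain ⟨S, hScard, hSin, hSout⟩ := hstep i hik
      have hjS : j ∈ S := by
        by_contra hjS
        exact hj (hSout j hjS).symm
      rw [hri] at hpref
      rw [(hSin j hjS).1] at hpref
      exact absurd hpref (p231_n0 b)
    · rw [hri]; exact hri1
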